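/- Let n be a natural number and let X and Y be topological spaces. Suppose f : X → Y and g : Y → X are continuous maps such that g ∘ f is homotopic to the identity of X and f ∘ g is homotopic to the identity of Y. Then for every ordinal κ: f maps w_n^κ(X) into w_n^κ(Y), g maps w_n^κ(Y) into w_n^κ(X), and the restricted continuous maps f_κ : w_n^κ(X) → w_n^κ(Y) and g_κ : w_n^κ(Y) → w_n^κ(X) (where both subsets carry the subspace topology) satisfy: g_κ ∘ f_κ is homotopic to the identity of w_n^κ(X) and f_κ ∘ g_κ is homotopic to the identity of w_n^κ(Y). -/

import Mathlib

open Set Filter Topology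

noncomputable section

/-- The unit `n`-sphere in `ℝ^{n+1}`. -/
def Sph (n : ℕ) : Set (EuclideanSpace ℝ (Fin (n + 1))) := Metric.sphere 0 1

/-- The basepoint `s₀ = (1,0,…,0)` of the `n`-sphere. -/
def sphBase (n : ℕ) : Sph n :=
  ⟨EuclideanSpace.single 0 1, by
    simp [Sph, mem_sphere_iff_norm, EuclideanSpace.norm_single]⟩

/-- A map `S^n → X` is essential if it is not (freely) homotopic to any constant map. -/
def Essential {n : ℕ} {X : Type*} [TopologicalSpace X] (f : C(Sph n, X)) : Prop :=
  ∀ x : X, ¬ f.Homotopic (ContinuousMap.const _ x)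

/-- A sequence of maps `S^n → X` converges to `x ∈ X` if every neighborhood of `x`
eventually contains all of their images. -/
def ConvergesTo {n : ℕ} {X : Type*} [TopologicalSpace X] (f : ℕ → C(Sph n, X)) (x : X) : Prop :=
  ∀ U ∈ 𝓝 x, ∀ᶠ k in atTop, ∀ s, f k s ∈ U

/-- `x` is a `π_n`-wild point of `X`. -/
def IsWildPoint (n : ℕ) {X : Type*} [TopologicalSpace X] (x : X) : Prop :=
  ∃ f : ℕ → C(Sph n, X), (∀ k, Essential (f k)) ∧ (∀ k, f k (sphBase n) = x) ∧ ConvergesTo f x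

/-- `x` is a free `π_n`-wild point of `X`. -/
def IsFreeWildPoint (n : ℕ) {X : Type*} [TopologicalSpace X] (x : X) : Prop :=
  ∃ f : ℕ → C(Sph n, X), (∀ k, Essential (f k)) ∧ ConvergesTo f x

/-- The `π_n`-wild set of a space `X`. -/
def wildSet (n : ℕ) (X : Type*) [TopologicalSpace X] : Set X := {x | IsWildPoint n x}

/-- The free `π_n`-wild set of a space `X`. -/
def freeWildSet (n : ℕ) (X : Type*) [TopologicalSpace X] : Set X := {x | IsFreeWildPoint n x}

/-- The `π_n`-wild set of a subset `S ⊆ X`, computed in the subspace topology,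
regarded again as a subset of `X`. -/
def wildSub (n : ℕ) {X : Type*} [TopologicalSpace X] (S : Set X) : Set X :=
  Subtype.val '' wildSet n ↥S

def freeWildSub (n : ℕ) {X : Type*} [TopologicalSpace X] (S : Set X) : Set X :=
  Subtype.val '' freeWildSet n ↥S

/-- The transfinitely iterated `π_n`-wild sets of `X`. -/
def iterWild (n : ℕ) (X : Type*) [TopologicalSpace X] (κ : Ordinal) : Set X :=
  Ordinal.limitRecOn (motive := fun _ => Set X) κ Set.univ (fun _ ih => wildSub n ih)
    (fun κ _ ih => ⋂ (o : Ordinal) (h : o < κ), ih o h)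

/-- The transfinitely iterated free `π_n`-wild sets of `X`. -/
def iterFreeWild (n : ℕ) (X : Type*) [TopologicalSpace X] (κ : Ordinal) : Set X :=
  Ordinal.limitRecOn (motive := fun _ => Set X) κ Set.univ (fun _ ih => freeWildSub n ih)
    (fun κ _ ih => ⋂ (o : Ordinal) (h : o < κ), ih o h)

/-- The `π_n`-wild rank of `X`: the least ordinal `κ` with `w_n^{κ+1}(X) = w_n^κ(X)`. -/
def wrk (n : ℕ) (X : Type*) [TopologicalSpace X] : Ordinal :=
  sInf {κ | iterWild n X (κ + 1) = iterWild n X κ}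

/-- The free `π_n`-wild rank of `X`. -/
def fwrk (n : ℕ) (X : Type*) [TopologicalSpace X] : Ordinal :=
  sInf {κ | iterFreeWild n X (κ + 1) = iterFreeWild n X κ}

/-- The restriction of a continuous map along `Set.MapsTo`, as a continuous map. -/
def cmRestrict {X Y : Type*} [TopologicalSpace X] [TopologicalSpace Y] (f : C(X, Y))
    {A : Set X} {B : Set Y} (h : Set.MapsTo f A B) : C(A, B) :=
  ⟨h.restrict f A B, f.continuous.restrict h⟩

/-- Straight-line path in the unit interval. -/
def segPath (s t : unitInterval) : Path s t where
  toFun u := ⟨(1 - (u : ℝ)) * s + u * t, by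
    constructor
    · nlinarith [u.2.1, u.2.2, s.2.1, s.2.2, t.2.1, t.2.2]
    · nlinarith [u.2.1, u.2.2, s.2.1, s.2.2, t.2.1, t.2.2]⟩
  continuous_toFun := by
    apply Continuous.subtype_mk
    fun_prop
  source' := Subtype.ext (by simp)
  target' := Subtype.ext (by simp)

/-- The cmSlice of a map `I × A → B` at time `t`. -/
def cmSlice {A B : Type*} [TopologicalSpace A] [TopologicalSpace B]
    (G : C(unitInterval × A, B)) (t : unitInterval) : C(A, B) :=
  ⟨fun x => G (t, x), G.continuous.comp (continuous_const.prodMk continuous_id)⟩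

lemma cmSlice_homotopic {A B : Type*} [TopologicalSpace A] [TopologicalSpace B]
    (G : C(unitInterval × A, B)) (s t : unitInterval) :
    (cmSlice G s).Homotopic (cmSlice G t) := by
  refine ⟨⟨⟨fun q => G (segPath s t q.1, q.2), ?_⟩, ?_, ?_⟩⟩
  · exact G.continuous.comp (((segPath s t).continuous.comp continuous_fst).prodMk
      continuous_snd)
  · intro x; simp [cmSlice]
  · intro x; simp [cmSlice]

/-- If the composite with `r` is essential, so is the original map. -/
lemma essential_of_comp {n : ℕ} {A B : Type*} [TopologicalSpace A] [TopologicalSpace B]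
    (r : C(B, A)) {ψ : C(Sph n, B)} (h : Essential (r.comp ψ)) : Essential ψ := by
  intro y hy
  refine h (r y) ?_
  have : (r.comp ψ).Homotopic (r.comp (ContinuousMap.const _ y)) :=
    (ContinuousMap.Homotopic.refl r).comp hy
  simpa using this

/-- A map with a left homotopy inverse maps wild points to wild points. -/
lemma mapsTo_wildSet {n : ℕ} {A B : Type*} [TopologicalSpace A] [TopologicalSpace B]
    (e : C(A, B)) (r : C(B, A)) (h : (r.comp e).Homotopic (ContinuousMap.id A)) :
    Set.MapsTo e (wildSet n A) (wildSet n B) := by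
  rintro x ⟨φ, hess, hbase, hconv⟩
  refine ⟨fun k => e.comp (φ k), ?_, ?_, ?_⟩
  · intro k
    refine essential_of_comp r ?_
    intro y hy
    have h1 : ((r.comp e).comp (φ k)).Homotopic ((ContinuousMap.id A).comp (φ k)) :=
      h.comp (ContinuousMap.Homotopic.refl (φ k))
    rw [ContinuousMap.comp_assoc, ContinuousMap.id_comp] at h1
    exact hess k y (h1.symm.trans hy)
  · intro k; simp [hbase k]
  · intro U hU
    have hV : e ⁻¹' U ∈ 𝓝 x := e.continuous.continuousAt.preimage_mem_nhds hU
    filter_upwards [hconv _ hV] with k hk s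
    exact hk s

/-- Restriction of a homotopy-of-self-maps to an invariant subset. -/
def cRestrictH {X : Type*} [TopologicalSpace X] (H : C(unitInterval × X, X)) {A : Set X}
    (hH : ∀ t, Set.MapsTo (fun x => H (t, x)) A A) : C(unitInterval × ↥A, ↥A) :=
  ⟨fun p => ⟨H (p.1, (p.2 : X)), hH p.1 p.2.2⟩,
    Continuous.subtype_mk (H.continuous.comp
      (continuous_fst.prodMk (continuous_subtype_val.comp continuous_snd))) _⟩

lemma iterWild_zero (n : ℕ) (X : Type*) [TopologicalSpace X] :
    iterWild n X 0 = Set.univ := Ordinal.limitRecOn_zero ..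

lemma iterWild_succ (n : ℕ) (X : Type*) [TopologicalSpace X] (κ : Ordinal) :
    iterWild n X (Order.succ κ) = wildSub n (iterWild n X κ) := Ordinal.limitRecOn_succ ..

lemma iterWild_limit (n : ℕ) (X : Type*) [TopologicalSpace X] {κ : Ordinal} (h : Order.IsSuccLimit κ) :
    iterWild n X κ = ⋂ (o : Ordinal) (_ : o < κ), iterWild n X o :=
  Ordinal.limitRecOn_limit _ _ _ _ h

section Key

variable {X Y : Type*} [TopologicalSpace X] [TopologicalSpace Y]

/-- From invariance data, the restricted maps compose to something homotopic to the
identity, witnessed by the restricted homotopy. -/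
lemma restrict_homotopic (n : ℕ) (f : C(X, Y)) (g : C(Y, X))
    (H : (g.comp f).Homotopy (ContinuousMap.id X)) {A : Set X} {B : Set Y}
    (hf : Set.MapsTo f A B) (hg : Set.MapsTo g B A)
    (hH : ∀ t, Set.MapsTo (fun x => H (t, x)) A A) :
    ((cmRestrict g hg).comp (cmRestrict f hf)).Homotopic (ContinuousMap.id ↥A) := by
  have h0 : cmSlice (cRestrictH H.toContinuousMap hH) 0 = (cmRestrict g hg).comp (cmRestrict f hf) := by
    ext a
    exact H.apply_zero (a : X)
  have h1 : cmSlice (cRestrictH H.toContinuousMap hH) 1 = ContinuousMap.id ↥A := by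
    ext a
    exact H.apply_one (a : X)
  rw [← h0, ← h1]
  exact cmSlice_homotopic _ 0 1

lemma key (n : ℕ) (f : C(X, Y)) (g : C(Y, X))
    (H : (g.comp f).Homotopy (ContinuousMap.id X))
    (K : (f.comp g).Homotopy (ContinuousMap.id Y)) (κ : Ordinal) :
    Set.MapsTo f (iterWild n X κ) (iterWild n Y κ) ∧
    Set.MapsTo g (iterWild n Y κ) (iterWild n X κ) ∧
    (∀ t, Set.MapsTo (fun x => H (t, x)) (iterWild n X κ) (iterWild n X κ)) ∧
    (∀ t, Set.MapsTo (fun y => K (t, y)) (iterWild n Y κ) (iterWild n Y κ)) := by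
  induction κ using Ordinal.limitRecOn with
  | zero =>
    rw [iterWild_zero, iterWild_zero]
    exact ⟨mapsTo_univ _ _, mapsTo_univ _ _, fun t => mapsTo_univ _ _, fun t => mapsTo_univ _ _⟩
  | add_one κ ih =>
    obtain ⟨hf, hg, hH, hK⟩ := ih
    set A := iterWild n X κ
    set B := iterWild n Y κ
    have hA : ((cmRestrict g hg).comp (cmRestrict f hf)).Homotopic (ContinuousMap.id ↥A) :=
      restrict_homotopic n f g H hf hg hH
    have hB : ((cmRestrict f hf).comp (cmRestrict g hg)).Homotopic (ContinuousMap.id ↥B) :=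
      restrict_homotopic n g f K hg hf hK
    have hAs : ∀ t, cmSlice (cRestrictH H.toContinuousMap hH) t |>.Homotopic (ContinuousMap.id ↥A) := by
      intro t
      have h1 : cmSlice (cRestrictH H.toContinuousMap hH) 1 = ContinuousMap.id ↥A := by
        ext a; exact H.apply_one (a : X)
      rw [← h1]; exact cmSlice_homotopic _ t 1
    have hBs : ∀ t, cmSlice (cRestrictH K.toContinuousMap hK) t |>.Homotopic (ContinuousMap.id ↥B) := by
      intro t
      have h1 : cmSlice (cRestrictH K.toContinuousMap hK) 1 = ContinuousMap.id ↥B := by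
        ext b; exact K.apply_one (b : Y)
      rw [← h1]; exact cmSlice_homotopic _ t 1
    rw [← Order.succ_eq_add_one, iterWild_succ, iterWild_succ]
    refine ⟨?_, ?_, ?_, ?_⟩
    · rintro x ⟨a, ha, rfl⟩
      exact ⟨_, mapsTo_wildSet (cmRestrict f hf) (cmRestrict g hg) hA ha, rfl⟩
    · rintro y ⟨b, hb, rfl⟩
      exact ⟨_, mapsTo_wildSet (cmRestrict g hg) (cmRestrict f hf) hB hb, rfl⟩
    · rintro t x ⟨a, ha, rfl⟩
      refine ⟨cmSlice (cRestrictH H.toContinuousMap hH) t a, ?_, rfl⟩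
      refine mapsTo_wildSet _ (ContinuousMap.id ↥A) ?_ ha
      rw [ContinuousMap.id_comp]; exact hAs t
    · rintro t y ⟨b, hb, rfl⟩
      refine ⟨cmSlice (cRestrictH K.toContinuousMap hK) t b, ?_, rfl⟩
      refine mapsTo_wildSet _ (ContinuousMap.id ↥B) ?_ hb
      rw [ContinuousMap.id_comp]; exact hBs t
  | limit κ hκ ih =>
    rw [iterWild_limit n X hκ, iterWild_limit n Y hκ]
    refine ⟨?_, ?_, ?_, ?_⟩
    · intro x hx
      simp only [mem_iInter] at hx ⊢
      exact fun o ho => (ih o ho).1 (hx o ho)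
    · intro y hy
      simp only [mem_iInter] at hy ⊢
      exact fun o ho => (ih o ho).2.1 (hy o ho)
    · intro t x hx
      simp only [mem_iInter] at hx ⊢
      exact fun o ho => (ih o ho).2.2.1 t (hx o ho)
    · intro t y hy
      simp only [mem_iInter] at hy ⊢
      exact fun o ho => (ih o ho).2.2.2 t (hy o ho)

end Key

/-- Homotopy inverses restrict to homotopy inverses between the
`κ`-th iterated `π_n`-wild sets, for every ordinal `κ`. -/
theorem statement7 (n : ℕ) {X Y : Type*} [TopologicalSpace X] [TopologicalSpace Y]
    (f : C(X, Y)) (g : C(Y, X))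
    (hgf : (g.comp f).Homotopic (ContinuousMap.id X))
    (hfg : (f.comp g).Homotopic (ContinuousMap.id Y)) (κ : Ordinal) :
    ∃ (hf : Set.MapsTo f (iterWild n X κ) (iterWild n Y κ))
      (hg : Set.MapsTo g (iterWild n Y κ) (iterWild n X κ)),
      ((cmRestrict g hg).comp (cmRestrict f hf)).Homotopic (ContinuousMap.id _) ∧
      ((cmRestrict f hf).comp (cmRestrict g hg)).Homotopic (ContinuousMap.id _) := by
  obtain ⟨H⟩ := hgf
  obtain ⟨K⟩ := hfg
  obtain ⟨hf, hg, hH, hK⟩ := key n f g H K κ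
  exact ⟨hf, hg, restrict_homotopic n f g H hf hg hH, restrict_homotopic n g f K hg hf hK⟩
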